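/- Let n be even with n ≥ 4, and let U̅_2 be the n-vertex unicyclic graph obtained from the path v_1 v_2 … v_n by adding the edge v_1 v_3. Then τ(U̅_2) = 3n²/4 − n − 1. -/

import Mathlib

open SimpleGraph Finset

/-- The eccentricity of a vertex `v` in a graph `G`: the maximum distance from `v`
to any vertex of `G`. -/
noncomputable def ecc {V : Type} [Fintype V] (G : SimpleGraph V) (v : V) : ℕ :=
  Finset.univ.sup fun w => G.dist v w

/-- The total-eccentricity index `τ(G) = ∑_{v ∈ V(G)} e_G(v)`. -/
noncomputable def totalEcc {V : Type} [Fintype V] (G : SimpleGraph V) : ℕ :=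
  ∑ v : V, ecc G v

/-!
In `U̅₂` the vertices `v₁` and `v₂` are adjacent twins: each is joined to the other and to `v₃`.
So the vertex `i : Fin n` (that is, `vᵢ₊₁`) sits at position `p = max i 1` of the path
`v₂ ⋯ vₙ`, and its eccentricity is `max (p - 1) (n - 1 - p)`. Walks along the path (through the
chord `v₁v₃` for `v₁`) give the upper bound; the position changes by at most one along every edge,
which gives the lower bound. Pairing vertex `i` with vertex `i + n/2`, each pair contributes
`3n/2 - 2` to `τ`, except the pair of `v₁`, which contributes one less.
-/

theorem ecc_eq_of_forall_dist_le {V : Type} [Fintype V] {G : SimpleGraph V} {v : V} {k : ℕ}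
    (hle : ∀ w, G.dist v w ≤ k) (hge : ∃ w, k ≤ G.dist v w) : ecc G v = k :=
  let ⟨w, hw⟩ := hge
  le_antisymm (Finset.sup_le fun w _ => hle w) (hw.trans (Finset.le_sup (mem_univ w)))

namespace SimpleGraph

variable {V : Type*} {G : SimpleGraph V}

theorem Walk.abs_sub_le_length (f : V → ℤ) (hf : ∀ a b, G.Adj a b → |f a - f b| ≤ 1)
    {u v : V} (p : G.Walk u v) : |f u - f v| ≤ p.length := by
  induction p with
  | nil => simp
  | cons h p ih =>
    rw [length_cons, Nat.cast_succ]
    exact (abs_sub_le _ _ _).trans (by linarith [hf _ _ h])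

theorem Reachable.abs_sub_le_dist {u v : V} (hr : G.Reachable u v) (f : V → ℤ)
    (hf : ∀ a b, G.Adj a b → |f a - f b| ≤ 1) : |f u - f v| ≤ G.dist u v := by
  obtain ⟨p, hp⟩ := hr.exists_walk_length_eq_dist
  exact hp ▸ p.abs_sub_le_length f hf

theorem pathGraph_dist_le {n : ℕ} {i j : Fin n} (h : i ≤ j) :
    (pathGraph n).dist i j ≤ j - i := by
  obtain ⟨k, hk⟩ : ∃ k, (j : ℕ) = i + k := ⟨j - i, by omega⟩
  induction k generalizing j with
  | zero => simp [Fin.ext (by omega : (j : ℕ) = i)]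
  | succ k ih =>
    have hik : (i : ℕ) + k < n := by omega
    have hadj : (pathGraph n).Adj ⟨i + k, hik⟩ j := pathGraph_adj.2 (Or.inl (by simp; omega))
    have htri := hadj.reachable.dist_triangle_right i
    have hk' := ih (j := ⟨i + k, hik⟩) (Fin.le_def.2 (by simp)) rfl
    rw [dist_eq_one_iff_adj.2 hadj] at htri
    simp only at hk'
    omega

theorem pathGraph_dist {n : ℕ} (i j : Fin n) :
    ((pathGraph n).dist i j : ℤ) = |(i : ℤ) - j| := by
  refine le_antisymm ?_ ((pathGraph_preconnected n i j).abs_sub_le_dist (fun v => v) ?_)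
  · rcases le_total i j with h | h
    · have := pathGraph_dist_le h
      rw [abs_sub_comm, abs_of_nonneg (by omega)]
      omega
    · have := pathGraph_dist_le h
      rw [dist_comm, abs_of_nonneg (by omega)]
      omega
  · intro a b hab
    rw [pathGraph_adj] at hab
    rw [abs_le]
    omega

def unicyclicU2 (n : ℕ) (h : 2 < n) : SimpleGraph (Fin n) :=
  pathGraph n ⊔ edge ⟨0, by omega⟩ ⟨2, h⟩

section unicyclicU2

variable {n : ℕ} (h : 2 < n)

theorem unicyclicU2_preconnected : (unicyclicU2 n h).Preconnected :=
  (pathGraph_preconnected n).mono le_sup_left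

theorem unicyclicU2_dist_le_pathGraph_dist (i j : Fin n) :
    (unicyclicU2 n h).dist i j ≤ (pathGraph n).dist i j :=
  (pathGraph_preconnected n i j).dist_anti le_sup_left

theorem unicyclicU2_dist_zero_le (j : Fin n) :
    (unicyclicU2 n h).dist ⟨0, by omega⟩ j ≤ max ((j : ℕ) - 1) 1 := by
  have hpath := pathGraph_dist ⟨0, by omega⟩ j
  have hpath₂ := pathGraph_dist ⟨2, h⟩ j
  have hle := unicyclicU2_dist_le_pathGraph_dist h ⟨0, by omega⟩ j
  have hle₂ := unicyclicU2_dist_le_pathGraph_dist h ⟨2, h⟩ j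
  have hadj : (unicyclicU2 n h).Adj ⟨0, by omega⟩ ⟨2, h⟩ := Or.inr (by simp [edge_adj])
  have htri := hadj.reachable.dist_triangle_left j
  rw [dist_eq_one_iff_adj.2 hadj] at htri
  rw [abs_eq_max_neg] at hpath hpath₂
  simp only at *
  omega

theorem unicyclicU2_dist_le (v w : Fin n) :
    (unicyclicU2 n h).dist v w ≤ max (max (v : ℕ) 1 - 1) (n - 1 - max (v : ℕ) 1) := by
  by_cases hv : (v : ℕ) = 0
  · obtain rfl : v = ⟨0, Nat.zero_lt_of_lt h⟩ := Fin.ext hv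
    have := unicyclicU2_dist_zero_le h w
    simp only at *
    omega
  by_cases hw : (w : ℕ) = 0
  · obtain rfl : w = ⟨0, Nat.zero_lt_of_lt h⟩ := Fin.ext hw
    have := unicyclicU2_dist_zero_le h v
    rw [dist_comm]
    omega
  have hle := unicyclicU2_dist_le_pathGraph_dist h v w
  have hpath := pathGraph_dist v w
  rw [abs_eq_max_neg] at hpath
  omega

theorem unicyclicU2_adj_abs_sub_le {a b : Fin n} (hab : (unicyclicU2 n h).Adj a b) :
    |((max (a : ℕ) 1 : ℕ) : ℤ) - (max (b : ℕ) 1 : ℕ)| ≤ 1 := by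
  rw [abs_le]
  rcases hab with hab | hab
  · rw [pathGraph_adj] at hab
    omega
  · rw [edge_adj, Fin.ext_iff, Fin.ext_iff, Fin.ext_iff, Fin.ext_iff] at hab
    simp only at hab
    omega

theorem ecc_unicyclicU2 (v : Fin n) :
    ecc (unicyclicU2 n h) v = max (max (v : ℕ) 1 - 1) (n - 1 - max (v : ℕ) 1) := by
  refine ecc_eq_of_forall_dist_le (unicyclicU2_dist_le h v) ?_
  have hdist (w : Fin n) := (unicyclicU2_preconnected h v w).abs_sub_le_dist _
    (fun a b hab => unicyclicU2_adj_abs_sub_le h hab)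
  have hfirst := hdist ⟨0, by omega⟩
  have hlast := hdist ⟨n - 1, by omega⟩
  rw [abs_le] at hfirst hlast
  simp only at hfirst hlast
  rcases le_total (n - 1 - max (v : ℕ) 1) (max (v : ℕ) 1 - 1) with hcase | hcase
  exacts [⟨⟨0, by omega⟩, by omega⟩, ⟨⟨n - 1, by omega⟩, by omega⟩]

end unicyclicU2

end SimpleGraph

theorem sum_range_unicyclicU2_ecc {m : ℕ} (hm : 1 ≤ m) :
    ∑ i ∈ range (m + m), max (max i 1 - 1) (m + m - 1 - max i 1) + 2 * m + 1 = 3 * m ^ 2 := by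
  have hpair : ∀ i ∈ range m, max (max i 1 - 1) (m + m - 1 - max i 1) +
      max (max (m + i) 1 - 1) (m + m - 1 - max (m + i) 1) + (2 + if i = 0 then 1 else 0) =
        3 * m := by
    intro i hi
    rw [mem_range] at hi
    split_ifs <;> omega
  have hsum := sum_congr rfl hpair
  rw [sum_add_distrib, sum_add_distrib, sum_add_distrib, sum_ite_eq', if_pos (mem_range.2 hm),
    sum_const, card_range, smul_eq_mul, sum_const, card_range, smul_eq_mul] at hsum
  rw [sum_range_add]
  nlinarith

theorem totalEcc_unicyclicU2 {m : ℕ} (h : 2 < m + m) :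
    totalEcc (unicyclicU2 (m + m) h) + 2 * m + 1 = 3 * m ^ 2 := by
  rw [totalEcc, ← sum_range_unicyclicU2_ecc (m := m) (by omega),
    ← Fin.sum_univ_eq_sum_range (fun i => max (max i 1 - 1) (m + m - 1 - max i 1))]
  simp only [ecc_unicyclicU2]

theorem totalEcc_U2 (n : ℕ) (hn : 4 ≤ n) (hev : Even n) :
    (totalEcc (pathGraph n ⊔
        fromEdgeSet {s((⟨0, by omega⟩ : Fin n), (⟨2, by omega⟩ : Fin n))}) : ℚ) =
      3 * n ^ 2 / 4 - n - 1 := by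
  obtain ⟨m, rfl⟩ := hev
  have h : 2 < m + m := by omega
  have hcount : (totalEcc (unicyclicU2 (m + m) h) : ℚ) + 2 * m + 1 = 3 * m ^ 2 := by
    exact_mod_cast totalEcc_unicyclicU2 h
  change (totalEcc (unicyclicU2 (m + m) h) : ℚ) = _
  push_cast
  linarith
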